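/- arXiv:2312.14028 — 3 statements merged into one kernel-verified Lean document; each statement's English description precedes it below -/
import Mathlib

section
/- For a monoid G, an endomorphism σ of G, an element g ∈ G, and natural numbers x, y, the semidirect-product key exchange is correct: letting A = ∏_{i=0}^{x-1} σ^i(g) and B = ∏_{i=0}^{y-1} σ^i(g), one has A·σ^x(B) = B·σ^y(A), and both equal ∏_{i=0}^{x+y-1} σ^i(g). -/
/-- The ordered product `g·σ(g)·σ²(g)⋯σ^{t-1}(g)` (equal to `1` when `t = 0`). -/
def twistedProd {G : Type*} [Monoid G] (σ : Monoid.End G) (g : G) (t : ℕ) : G :=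
  ((List.range t).map fun i => (σ ^ i) g).prod

theorem twistedProd_add {G : Type*} [Monoid G] (σ : Monoid.End G) (g : G) (x y : ℕ) :
    twistedProd σ g (x + y) = twistedProd σ g x * (σ ^ x) (twistedProd σ g y) := by
  simp only [twistedProd, List.range_add, List.map_append, List.prod_append, List.map_map,
    map_list_prod, Function.comp_def, pow_add, Monoid.End.coe_mul, Function.comp_apply]

/-- correctness of the semidirect-product key exchange.
With `A = ∏_{i=0}^{x-1} σ^i(g)` and `B = ∏_{i=0}^{y-1} σ^i(g)`, one has
`A·σ^x(B) = B·σ^y(A)`, and both equal `∏_{i=0}^{x+y-1} σ^i(g)`. -/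
theorem spdke_correct {G : Type*} [Monoid G] (σ : Monoid.End G) (g : G) (x y : ℕ) :
    twistedProd σ g x * (σ ^ x) (twistedProd σ g y)
        = twistedProd σ g y * (σ ^ y) (twistedProd σ g x) ∧
      twistedProd σ g x * (σ ^ x) (twistedProd σ g y) = twistedProd σ g (x + y) := by
  refine ⟨?_, (twistedProd_add σ g x y).symm⟩
  rw [← twistedProd_add, ← twistedProd_add, add_comm]
end

section
/- Let G be a monoid, σ an endomorphism of G, and g ∈ G. For all natural numbers r and t, ρ_{(g,1)^{rt}}(1_G) = ρ_{(g',r)^t}(1_G), where g' = ρ_{(g,1)^r}(1_G). In other words, the SDLP orbit at stride r is itself an SDLP orbit with automorphism σ^r and base element g'. -/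
/-- Multiplication in the semidirect product `G ⋊_σ ℕ`:
`(g,s)(g',s') = (g·σ^s(g'), s+s')`. -/
def sdMul {G : Type*} [Monoid G] (σ : Monoid.End G) (x y : G × ℕ) : G × ℕ :=
  (x.1 * (σ ^ x.2) y.1, x.2 + y.2)

/-- The `t`-th power in the semidirect product `G ⋊_σ ℕ`. -/
def sdPow {G : Type*} [Monoid G] (σ : Monoid.End G) (x : G × ℕ) : ℕ → G × ℕ
  | 0 => (1, 0)
  | t + 1 => sdMul σ x (sdPow σ x t)

/-- The transformation `ρ_{(g,s)} : G → G`, `x ↦ g·σ^s(x)`. -/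
def rho {G : Type*} [Monoid G] (σ : Monoid.End G) (x : G × ℕ) : G → G :=
  fun z => x.1 * (σ ^ x.2) z

section SemidirectPower

variable {G : Type*} [Monoid G] (σ : Monoid.End G)

theorem rho_apply_one (x : G × ℕ) : rho σ x 1 = x.1 := by
  simp [rho]

theorem sdMul_assoc (x y z : G × ℕ) :
    sdMul σ (sdMul σ x y) z = sdMul σ x (sdMul σ y z) := by
  simp [sdMul, pow_add, mul_assoc, Nat.add_assoc]

theorem sdPow_add (x : G × ℕ) (m n : ℕ) :
    sdPow σ x (m + n) = sdMul σ (sdPow σ x m) (sdPow σ x n) := by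
  induction m with
  | zero => simp [sdPow, sdMul]
  | succ m ih => rw [Nat.succ_add, sdPow, ih, sdPow, sdMul_assoc]

theorem sdPow_snd (x : G × ℕ) (n : ℕ) : (sdPow σ x n).2 = x.2 * n := by
  induction n with
  | zero => rfl
  | succ n ih => simp only [sdPow, sdMul, ih, Nat.mul_succ, Nat.add_comm]

theorem sdPow_mul (x : G × ℕ) (m n : ℕ) :
    sdPow σ x (m * n) = sdPow σ (sdPow σ x m) n := by
  induction n with
  | zero => rfl
  | succ n ih => rw [Nat.mul_succ, Nat.add_comm, sdPow_add, ih, sdPow]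

end SemidirectPower

/-- `ρ_{(g,1)^{rt}}(1_G) = ρ_{(g',r)^t}(1_G)` where
`g' = ρ_{(g,1)^r}(1_G)`: the SDLP orbit at stride `r` is an SDLP orbit for `σ^r`. -/
theorem sdlp_stride {G : Type*} [Monoid G] (σ : Monoid.End G) (g : G) (r t : ℕ) :
    rho σ (sdPow σ (g, 1) (r * t)) 1
      = rho σ (sdPow σ (rho σ (sdPow σ (g, 1) r) 1, r) t) 1 := by
  have hbase : (rho σ (sdPow σ (g, 1) r) 1, r) = sdPow σ (g, 1) r :=
    Prod.ext (rho_apply_one σ _) (by rw [sdPow_snd, one_mul])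
  rw [hbase, sdPow_mul]
end

section
/- Let G be a finite monoid, σ an endomorphism of G, and g, h ∈ G. The set of natural numbers t with h = ρ_{(g,1)^t}(1_G) is either empty, a singleton, or of the form {x₀ + a·x : x ∈ ℕ} for some natural numbers x₀ and a with a > 0. -/
namespace Function

variable {α : Type*} {f : α → α} {a b : α} {t₀ : ℕ}

theorem iterate_eq_iff_minimalPeriod_dvd (h₀ : f^[t₀] a = b)
    (hmin : ∀ t, f^[t] a = b → t₀ ≤ t) (t : ℕ) :
    f^[t] a = b ↔ t₀ ≤ t ∧ minimalPeriod f b ∣ t - t₀ := by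
  rw [← isPeriodicPt_iff_minimalPeriod_dvd]
  constructor
  · intro ht
    have hle := hmin t ht
    refine ⟨hle, ?_⟩
    calc f^[t - t₀] b = f^[t - t₀ + t₀] a := by rw [iterate_add_apply, h₀]
      _ = b := by rw [Nat.sub_add_cancel hle, ht]
  · rintro ⟨hle, hper⟩
    rw [← Nat.sub_add_cancel hle, iterate_add_apply, h₀]
    exact hper

theorem setOf_iterate_eq_trichotomy (f : α → α) (a b : α) :
    {t : ℕ | f^[t] a = b} = ∅ ∨ (∃ t₀ : ℕ, {t : ℕ | f^[t] a = b} = {t₀}) ∨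
      ∃ x₀ p : ℕ, 0 < p ∧ {t : ℕ | f^[t] a = b} = {n : ℕ | ∃ x : ℕ, n = x₀ + p * x} := by
  classical
  by_cases hvisit : ∃ t, f^[t] a = b
  swap
  · exact Or.inl (Set.eq_empty_of_forall_notMem fun t ht => hvisit ⟨t, ht⟩)
  have hvisit_iff := iterate_eq_iff_minimalPeriod_dvd (Nat.find_spec hvisit)
    fun t => Nat.find_min' hvisit
  rcases (minimalPeriod f b).eq_zero_or_pos with hp | hp
  · refine Or.inr (Or.inl ⟨Nat.find hvisit, Set.ext fun t => (hvisit_iff t).trans ?_⟩)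
    rw [hp, zero_dvd_iff, Set.mem_singleton_iff]
    omega
  · refine Or.inr (Or.inr ⟨Nat.find hvisit, minimalPeriod f b, hp,
      Set.ext fun t => (hvisit_iff t).trans ?_⟩)
    constructor
    · rintro ⟨hle, k, hk⟩
      exact ⟨k, by omega⟩
    · rintro ⟨x, rfl⟩
      simp

end Function

section SemidirectProduct

variable {G : Type*} [Monoid G] (σ : Monoid.End G)

theorem rho_sdMul (x y : G × ℕ) : rho σ (sdMul σ x y) = rho σ x ∘ rho σ y := by
  funext z
  simp only [rho, sdMul, Function.comp_apply, pow_add, Monoid.End.coe_mul, map_mul, mul_assoc]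

theorem rho_sdPow (x : G × ℕ) (t : ℕ) : rho σ (sdPow σ x t) = (rho σ x)^[t] := by
  induction t with
  | zero => funext z; simp [sdPow, rho]
  | succ t ih => rw [sdPow, rho_sdMul, ih, Function.iterate_succ']

end SemidirectProduct

theorem sdlp_solution_set_general {G : Type*} [Monoid G] (σ : Monoid.End G) (g h : G) :
    {t : ℕ | h = rho σ (sdPow σ (g, 1) t) 1} = ∅ ∨
      (∃ t₀ : ℕ, {t : ℕ | h = rho σ (sdPow σ (g, 1) t) 1} = {t₀}) ∨
      (∃ x₀ a : ℕ, 0 < a ∧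
        {t : ℕ | h = rho σ (sdPow σ (g, 1) t) 1} = {n : ℕ | ∃ x : ℕ, n = x₀ + a * x}) := by
  simp only [rho_sdPow, eq_comm (a := h)]
  exact Function.setOf_iterate_eq_trichotomy _ 1 h

/-- for a finite monoid, the solution set of the SDLP is empty,
a singleton, or an arithmetic progression `{x₀ + a·x : x ∈ ℕ}` with `a > 0`. -/
theorem sdlp_solution_set {G : Type*} [Monoid G] [Finite G] (σ : Monoid.End G) (g h : G) :
    {t : ℕ | h = rho σ (sdPow σ (g, 1) t) 1} = ∅ ∨
      (∃ t₀ : ℕ, {t : ℕ | h = rho σ (sdPow σ (g, 1) t) 1} = {t₀}) ∨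
      (∃ x₀ a : ℕ, 0 < a ∧
        {t : ℕ | h = rho σ (sdPow σ (g, 1) t) 1} = {n : ℕ | ∃ x : ℕ, n = x₀ + a * x}) :=
  sdlp_solution_set_general σ g h
end
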